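/- The follow relation ≡_f on Pos₀(α), defined by x ≡_f y iff (x ∈ last₀(α) ⇔ y ∈ last₀(α)) and follow(α,x) = follow(α,y), is a right-invariant equivalence relation on the position automaton A_pos(α), where last₀(α) = last(α)∪{0} if ε∈L(α) and last(α) otherwise. -/
import Mathlib


open RegularExpression
open scoped Classical

variable {σ : Type*}

/-- Alphabetic size: number of letter occurrences. -/
def alph : RegularExpression σ → ℕ
  | zero => 0
  | epsilon => 0
  | char _ => 1
  | plus P Q => alph P + alph Q
  | comp P Q => alph P + alph Q
  | RegularExpression.star P => alph P

/-- Mark every letter occurrence with its position; `n` is the number of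
positions used so far (positions are `n+1, n+2, …`). -/
def mark : RegularExpression σ → ℕ → RegularExpression (σ × ℕ)
  | zero, _ => zero
  | epsilon, _ => epsilon
  | char a, n => char (a, n + 1)
  | plus P Q, n => plus (mark P n) (mark Q (n + alph P))
  | comp P Q, n => comp (mark P n) (mark Q (n + alph P))
  | RegularExpression.star P, n => RegularExpression.star (mark P n)

/-- The marked version `ᾱ` of `α`, with positions `1, …, |α|_Σ`. -/
def marked (α : RegularExpression σ) : RegularExpression (σ × ℕ) :=
  mark α 0

/-- `first(α)`: positions that can begin a word of `L(ᾱ)`. -/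
def first (α : RegularExpression σ) : Set ℕ :=
  {j | ∃ a w, ((a, j) :: w) ∈ (marked α).matches'}

/-- `last(α)`: positions that can end a word of `L(ᾱ)`. -/
def last (α : RegularExpression σ) : Set ℕ :=
  {j | ∃ a w, (w ++ [(a, j)]) ∈ (marked α).matches'}

/-- `follow(α,i)`: positions that can follow position `i` in a word of `L(ᾱ)`,
with `follow(α,0) = first(α)`. -/
def follow (α : RegularExpression σ) (i : ℕ) : Set ℕ :=
  if i = 0 then first α
  else {j | ∃ a b u v, (u ++ (a, i) :: (b, j) :: v) ∈ (marked α).matches'}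

/-- The letter occurring at position `j` (1-indexed) of `α`, if any. -/
def letterAt : RegularExpression σ → ℕ → Option σ
  | zero, _ => none
  | epsilon, _ => none
  | char a, j => if j = 1 then some a else none
  | plus P Q, j => if j ≤ alph P then letterAt P j else letterAt Q (j - alph P)
  | comp P Q, j => if j ≤ alph P then letterAt P j else letterAt Q (j - alph P)
  | RegularExpression.star P, j => letterAt P j

/-- `Pos₀(α) = {0, 1, …, |α|_Σ}` as a type. -/
def Pos0 (α : RegularExpression σ) : Type _ := {i : ℕ // i ≤ alph α}

/-- The final-state set: `last(α) ∪ {0}` if `ε ∈ L(α)`, else `last(α)`. -/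

noncomputable def lastZero (α : RegularExpression σ) : Set ℕ :=
  if [] ∈ α.matches' then last α ∪ {0} else last α

/-- The Glushkov position automaton of `α`. -/
noncomputable def posNFA (α : RegularExpression σ) : NFA σ (Pos0 α) where
  step := fun i a => {j | j.1 ∈ follow α i.1 ∧ letterAt α j.1 = some a}
  start := {i | i.1 = 0}
  accept := {i | i.1 ∈ lastZero α}

/-- `E` is a right-invariant equivalence relation w.r.t. the NFA `M`:
it is an equivalence, it refines the partition `{Q∖F, F}`, and related
states have the same sets of `E`-classes of successors. -/
def RightInvariant {A Q : Type*} (M : NFA A Q) (E : Q → Q → Prop) : Prop :=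
  Equivalence E ∧
  (∀ p q, E p q → (p ∈ M.accept ↔ q ∈ M.accept)) ∧
  (∀ p q a, E p q →
    (∀ r ∈ M.step p a, ∃ s ∈ M.step q a, E r s) ∧
    (∀ s ∈ M.step q a, ∃ r ∈ M.step p a, E r s))

/-- The quotient of an NFA by an equivalence relation on its states. -/
def quotNFA {A Q : Type*} (M : NFA A Q) (s : Setoid Q) : NFA A (Quotient s) where
  step := fun x a => {y | ∃ p q, x = Quotient.mk s p ∧ y = Quotient.mk s q ∧ q ∈ M.step p a}
  start := {x | ∃ p ∈ M.start, x = Quotient.mk s p}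
  accept := {x | ∃ p ∈ M.accept, x = Quotient.mk s p}

/-- The follow relation `≡_f` on `Pos₀(α)`. -/
def followRel (α : RegularExpression σ) : Pos0 α → Pos0 α → Prop := fun x y =>
  (x.1 ∈ lastZero α ↔ y.1 ∈ lastZero α) ∧ follow α x.1 = follow α y.1

/-- The follow relation is a right-invariant equivalence on the position automaton. -/
theorem followRel_rightInvariant (α : RegularExpression σ) :
    RightInvariant (posNFA α) (followRel α) := by
  refine ⟨⟨fun x => ⟨Iff.rfl, rfl⟩, fun h => ⟨h.1.symm, h.2.symm⟩,
    fun h h' => ⟨h.1.trans h'.1, h.2.trans h'.2⟩⟩, fun p q h => h.1, fun p q a h => ?_⟩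
  have hstep : (posNFA α).step p a = (posNFA α).step q a := by
    simp only [posNFA, h.2]
  constructor
  · intro r hr
    exact ⟨r, hstep ▸ hr, ⟨Iff.rfl, rfl⟩⟩
  · intro s hs
    exact ⟨s, hstep ▸ hs, ⟨Iff.rfl, rfl⟩⟩
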